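/- For every ε > 0 there exists N ∈ ℕ such that for all n ≥ N, for every n-digit Benford random variable Y taking values in the positive reals whose logarithm X = log₁₀ Y has a probability density function, and for all digits d₁ ∈ {1,…,9}, d₂,…,dₙ ∈ {0,…,9}, one has | 10^{n−1} · E[S_{d₁⋯dₙ} Y] − 1/ln 10 | < ε. That is, as n → ∞, the normalized expected significand sums of n-digit Benford variables converge, uniformly over all digit tuples, to 1/ln 10, the value characterizing sum-invariant (Benford) variables. -/

import Mathlib

open MeasureTheory Real

/-- The base-10 significand `S(y) = 10 ^ (log₁₀ y − ⌊log₁₀ y⌋) ∈ [1,10)`. -/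
noncomputable def signif (y : ℝ) : ℝ :=
  (10 : ℝ) ^ (Real.logb 10 y - (⌊Real.logb 10 y⌋ : ℝ))

/-- `d : Fin n → ℕ` is a valid digit tuple: every digit is at most 9 and the
leading digit (index 0) is at least 1. -/
def IsDigitTuple (n : ℕ) (d : Fin n → ℕ) : Prop :=
  (∀ i, d i ≤ 9) ∧ ∀ i : Fin n, (i : ℕ) = 0 → 1 ≤ d i

/-- `xₙ = 10^(n−1) d₁ + 10^(n−2) d₂ + ⋯ + dₙ` for a digit tuple `d`. -/
def digitVal (n : ℕ) (d : Fin n → ℕ) : ℕ :=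
  ∑ i : Fin n, d i * 10 ^ (n - 1 - (i : ℕ))

/-- `y > 0` has first `n` significant digits given by the tuple `d` iff
`⌊10^(n−1) · S(y)⌋ = xₙ`. -/
def HasFirstDigits (n : ℕ) (d : Fin n → ℕ) (y : ℝ) : Prop :=
  ⌊(10 : ℝ) ^ (n - 1) * signif y⌋ = (digitVal n d : ℤ)

/-- A random variable `Y` on `(Ω, P)` is `n`-digit Benford if for every valid
digit tuple `d`, the probability that the first `n` significant digits of `Y`
are `d₁, …, dₙ` equals `log₁₀ (1 + 1/xₙ)`. -/
def NDigitBenford {Ω : Type*} [MeasurableSpace Ω] (P : Measure Ω) (Y : Ω → ℝ)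
    (n : ℕ) : Prop :=
  ∀ d : Fin n → ℕ, IsDigitTuple n d →
    P {ω | HasFirstDigits n d (Y ω)}
      = ENNReal.ofReal (Real.logb 10 (1 + 1 / (digitVal n d : ℝ)))

/-- The expected significand sum `E[S_{d₁⋯dₙ} Y]`: the expectation of `S(Y)`
restricted to the event that the first `n` significant digits of `Y` are `d`. -/
noncomputable def expSignifSum {Ω : Type*} [MeasurableSpace Ω] (P : Measure Ω)
    (Y : Ω → ℝ) (n : ℕ) (d : Fin n → ℕ) : ℝ :=
  ∫ ω, Set.indicator {ω | HasFirstDigits n d (Y ω)} (fun ω => signif (Y ω)) ω ∂P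

open Filter
open scoped ENNReal Topology

/-! On the event that the first `n` digits of `Y` are those of `xₙ` one has
`xₙ ≤ 10^(n-1) S(Y) < xₙ + 1`, and the Benford property gives this event probability
`log₁₀ (1 + 1/xₙ)`. Hence `10^(n-1) E[S_{d₁⋯dₙ} Y]` lies between `xₙ log₁₀ (1 + 1/xₙ)` and
`(xₙ + 1) log₁₀ (1 + 1/xₙ)`, both of which tend to `1 / ln 10` as `xₙ → ∞`; uniformity in the
digits comes from `xₙ ≥ 10^(n-1) ≥ n`. -/

lemma measurable_signif : Measurable signif := by
  unfold signif Real.logb; fun_prop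

lemma tendsto_mul_logb_one_add_one_div_atTop :
    Tendsto (fun x : ℝ => x * logb 10 (1 + 1 / x)) atTop (𝓝 (1 / log 10)) := by
  have h : Tendsto (fun x : ℝ => x * log (1 + 1 / x)) atTop (𝓝 1) := by
    simpa using tendsto_mul_log_one_add_div_atTop 1
  refine (h.div_const (log 10)).congr fun x => ?_
  rw [logb, mul_div_assoc]

lemma tendsto_logb_one_add_one_div_atTop :
    Tendsto (fun x : ℝ => logb 10 (1 + 1 / x)) atTop (𝓝 0) := by
  have h : Tendsto (fun x : ℝ => 1 + 1 / x) atTop (𝓝 1) := by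
    simpa using tendsto_inv_atTop_zero.const_add (1 : ℝ)
  simpa [Function.comp_def, logb] using
    ((continuousAt_log one_ne_zero).div_const (log 10)).tendsto.comp h

lemma tendsto_add_one_mul_logb_one_add_one_div_atTop :
    Tendsto (fun x : ℝ => (x + 1) * logb 10 (1 + 1 / x)) atTop (𝓝 (1 / log 10)) := by
  simpa [add_mul] using
    tendsto_mul_logb_one_add_one_div_atTop.add tendsto_logb_one_add_one_div_atTop

lemma pow_le_digitVal {n : ℕ} {d : Fin n → ℕ} (hd : IsDigitTuple n d) (hn : 0 < n) :
    10 ^ (n - 1) ≤ digitVal n d := by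
  let i₀ : Fin n := ⟨0, hn⟩
  calc 10 ^ (n - 1) ≤ d i₀ * 10 ^ (n - 1 - (i₀ : ℕ)) :=
        Nat.le_mul_of_pos_left _ (hd.2 i₀ rfl)
    _ ≤ digitVal n d :=
        Finset.single_le_sum (f := fun i : Fin n => d i * 10 ^ (n - 1 - (i : ℕ)))
          (fun _ _ => Nat.zero_le _) (Finset.mem_univ i₀)

lemma self_le_digitVal {n : ℕ} {d : Fin n → ℕ} (hd : IsDigitTuple n d) : n ≤ digitVal n d := by
  rcases Nat.eq_zero_or_pos n with rfl | hn
  · exact Nat.zero_le _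
  · have := Nat.lt_pow_self (n := n - 1) (by norm_num : 1 < 10)
    have := pow_le_digitVal hd hn
    omega

lemma setIntegral_floor_eq_mem_Icc {Ω : Type*} [MeasurableSpace Ω] {μ : Measure Ω}
    {g : Ω → ℝ} (hg : Measurable g) (k : ℤ) (hμ : μ {ω | ⌊g ω⌋ = k} ≠ ∞) :
    ∫ ω in {ω | ⌊g ω⌋ = k}, g ω ∂μ ∈
      Set.Icc (k * μ.real {ω | ⌊g ω⌋ = k}) ((k + 1) * μ.real {ω | ⌊g ω⌋ = k}) := by
  set A := {ω | ⌊g ω⌋ = k}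
  have hA : MeasurableSet A := hg.floor (measurableSet_singleton k)
  have hbounds : ∀ ω ∈ A, (k : ℝ) ≤ g ω ∧ g ω < k + 1 := fun ω hω => Int.floor_eq_iff.1 hω
  have hint : IntegrableOn g A μ :=
    Measure.integrableOn_of_bounded hμ hg.aestronglyMeasurable (M := max |(k : ℝ)| |k + 1|)
      ((ae_restrict_iff' hA).2 <| Eventually.of_forall fun ω hω =>
        abs_le_max_abs_abs (hbounds ω hω).1 (hbounds ω hω).2.le)
  refine ⟨setIntegral_ge_of_const_le_real hA hμ (fun ω hω => (hbounds ω hω).1) hint, ?_⟩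
  calc ∫ ω in A, g ω ∂μ ≤ ∫ _ in A, ((k : ℝ) + 1) ∂μ :=
        setIntegral_mono_on hint (integrableOn_const hμ) hA fun ω hω => (hbounds ω hω).2.le
    _ = (k + 1) * μ.real A := by rw [setIntegral_const, smul_eq_mul, mul_comm]

lemma NDigitBenford.mul_expSignifSum_mem_Icc {Ω : Type*} [MeasurableSpace Ω] {P : Measure Ω}
    {Y : Ω → ℝ} {n : ℕ} (hB : NDigitBenford P Y n) (hY : Measurable Y) {d : Fin n → ℕ}
    (hd : IsDigitTuple n d) :
    (10 : ℝ) ^ (n - 1) * expSignifSum P Y n d ∈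
      Set.Icc (digitVal n d * logb 10 (1 + 1 / digitVal n d))
        ((digitVal n d + 1) * logb 10 (1 + 1 / digitVal n d)) := by
  set g : Ω → ℝ := fun ω => 10 ^ (n - 1) * signif (Y ω)
  have hA : {ω | HasFirstDigits n d (Y ω)} = {ω | ⌊g ω⌋ = (digitVal n d : ℤ)} := rfl
  have hg : Measurable g := measurable_const.mul (measurable_signif.comp hY)
  have hmeas : MeasurableSet {ω | HasFirstDigits n d (Y ω)} :=
    hg.floor (measurableSet_singleton _)
  have hlogb : 0 ≤ logb 10 (1 + 1 / digitVal n d) :=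
    logb_nonneg (by norm_num) (le_add_of_nonneg_right (by positivity))
  have hprob := hB d hd
  have hreal : P.real {ω | HasFirstDigits n d (Y ω)} = logb 10 (1 + 1 / digitVal n d) := by
    rw [measureReal_def, hprob, ENNReal.toReal_ofReal hlogb]
  have hint : (10 : ℝ) ^ (n - 1) * expSignifSum P Y n d =
      ∫ ω in {ω | ⌊g ω⌋ = (digitVal n d : ℤ)}, g ω ∂P := by
    rw [expSignifSum, integral_indicator hmeas, ← integral_const_mul, hA]
  obtain ⟨hlo, hhi⟩ := setIntegral_floor_eq_mem_Icc hg (digitVal n d)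
    (by rw [← hA, hprob]; exact ENNReal.ofReal_ne_top)
  rw [← hA, hreal] at hlo hhi
  rw [hint]
  exact ⟨mod_cast hlo, mod_cast hhi⟩

/-- **`n`-digit Benford variables converge to Benford in the sum-invariance
sense.** For every `ε > 0` there is `N` such that for all `n ≥ N`, every
`n`-digit Benford variable `Y` whose logarithm `log₁₀ Y` has a probability
density function satisfies, for every digit tuple `d₁, …, dₙ`,
`|10^(n−1) · E[S_{d₁⋯dₙ} Y] − 1/ln 10| < ε`. -/
theorem nDigitBenford_tendsto_sumInvariance :
    ∀ ε : ℝ, 0 < ε → ∃ N : ℕ, ∀ n : ℕ, N ≤ n →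
      ∀ (Ω : Type) (_ : MeasurableSpace Ω) (P : Measure Ω),
        IsProbabilityMeasure P →
        ∀ Y : Ω → ℝ, Measurable Y → (∀ ω, 0 < Y ω) →
        (∃ g : ℝ → ℝ, (∀ x, 0 ≤ g x) ∧ MeasureTheory.Integrable g ∧
          P.map (fun ω => Real.logb 10 (Y ω))
            = MeasureTheory.volume.withDensity (fun x => ENNReal.ofReal (g x))) →
        NDigitBenford P Y n →
        ∀ d : Fin n → ℕ, IsDigitTuple n d →
          |(10 : ℝ) ^ (n - 1) * expSignifSum P Y n d - 1 / Real.log 10| < ε := by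
  intro ε hε
  obtain ⟨M, hM⟩ := eventually_atTop.1 <|
    (tendsto_mul_logb_one_add_one_div_atTop.eventually (Metric.ball_mem_nhds _ hε)).and
      (tendsto_add_one_mul_logb_one_add_one_div_atTop.eventually (Metric.ball_mem_nhds _ hε))
  refine ⟨⌈M⌉₊, fun n hn Ω _ P _ Y hY _ _ hB d hd => ?_⟩
  have hMx : M ≤ digitVal n d :=
    (Nat.le_ceil M).trans (mod_cast hn.trans (self_le_digitVal hd))
  obtain ⟨hlo, hhi⟩ := hM _ hMx
  obtain ⟨hlower, hupper⟩ := hB.mul_expSignifSum_mem_Icc hY hd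
  rw [Real.dist_eq, abs_lt] at hlo hhi
  rw [abs_lt]
  constructor <;> linarith [hlo.1, hhi.2]
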